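/- There exists a constant C > 0 such that if p > C·√(ln n)/n, then with high probability the following holds for G = G³(n,p): for every F₅-free subhypergraph H of G, every balanced 3-partition π = (V₁,V₂,V₃) of [n] maximizing |H_π|, and every edge x₁x₂ of J not belonging to Q(π), there are at least p²·n²/12 pairs (y,z) with y ∈ V₂, z ∈ V₃ such that {x₁,x₂,y,z} spans an F̂₅. -/

import Mathlib

open Finset MeasureTheory Filter

attribute [local instance] Classical.propDecidable

set_option maxHeartbeats 1000000

/-- A potential hyperedge: a 3-element subset of the vertex set `Fin n`. -/
abbrev Edge (n : ℕ) := {e : Finset (Fin n) // e.card = 3}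

/-- Bernoulli measure on `Bool` with parameter `p`. -/
noncomputable def bern (p : ℝ) : Measure Bool :=
  (Real.toNNReal p) • Measure.dirac true + (Real.toNNReal (1 - p)) • Measure.dirac false

/-- The law of the random 3-uniform hypergraph `G³(n,p)`: each triple is present
independently with probability `p`. A sample point `ω : Edge n → Bool` records which
triples are hyperedges. -/
noncomputable def hypM (n : ℕ) (p : ℝ) : Measure (Edge n → Bool) :=
  Measure.pi fun _ => bern p

/-- The set of hyperedges of the sampled hypergraph. -/
noncomputable def hedges {n : ℕ} (ω : Edge n → Bool) : Finset (Edge n) :=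
  Finset.univ.filter fun e => ω e = true

/-- The triple `s` is a hyperedge of the hypergraph `H`. -/
def memH {n : ℕ} (H : Finset (Edge n)) (s : Finset (Fin n)) : Prop :=
  ∃ e ∈ H, (e : Finset (Fin n)) = s

/-- `H` contains no copy of `F₅`, the hypergraph on `{1,...,5}` with edges
`{123, 124, 345}`. -/
def F5Free {n : ℕ} (H : Finset (Edge n)) : Prop :=
  ¬ ∃ f : Fin 5 → Fin n, Function.Injective f ∧
      memH H {f 0, f 1, f 2} ∧ memH H {f 0, f 1, f 3} ∧ memH H {f 2, f 3, f 4}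

/-- `H` is tripartite: the vertex set can be partitioned into three parts such that
every hyperedge has exactly one vertex in each part. -/
def Tripartite {n : ℕ} (H : Finset (Edge n)) : Prop :=
  ∃ V : Fin 3 → Finset (Fin n),
    (∀ v : Fin n, ∃! i : Fin 3, v ∈ V i) ∧
    ∀ e ∈ H, ∀ i : Fin 3, ((e : Finset (Fin n)) ∩ V i).card = 1

/-- `(V₁, V₂, V₃)` is a 3-partition of the vertex set. -/
def IsPartition3 {n : ℕ} (V₁ V₂ V₃ : Finset (Fin n)) : Prop :=
  Disjoint V₁ V₂ ∧ Disjoint V₁ V₃ ∧ Disjoint V₂ V₃ ∧ V₁ ∪ V₂ ∪ V₃ = Finset.univ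

/-- A balanced 3-partition: every part has size `(1 ± 10⁻¹⁰) n / 3`. -/
def Balanced3 {n : ℕ} (V₁ V₂ V₃ : Finset (Fin n)) : Prop :=
  IsPartition3 V₁ V₂ V₃ ∧
    ∀ V ∈ [V₁, V₂, V₃],
      (1 - 1e-10 : ℝ) * n / 3 ≤ (V.card : ℝ) ∧ (V.card : ℝ) ≤ (1 + 1e-10 : ℝ) * n / 3

/-- The crossing hyperedges of `H` w.r.t. `(V₁,V₂,V₃)`: those with exactly one vertex
in each part (i.e. `H ∩ K_π`). -/
noncomputable def crossing {n : ℕ} (V₁ V₂ V₃ : Finset (Fin n)) (H : Finset (Edge n)) :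
    Finset (Edge n) :=
  H.filter fun e => ((e : Finset (Fin n)) ∩ V₁).card = 1 ∧
    ((e : Finset (Fin n)) ∩ V₂).card = 1 ∧ ((e : Finset (Fin n)) ∩ V₃).card = 1

/-- The missing crossing hyperedges `H̄_π = G_π \ H_π`. -/
noncomputable def Hbar {n : ℕ} (ω : Edge n → Bool) (V₁ V₂ V₃ : Finset (Fin n))
    (H : Finset (Edge n)) : Finset (Edge n) :=
  crossing V₁ V₂ V₃ (hedges ω) \ crossing V₁ V₂ V₃ H

/-- `H_i`: the hyperedges of `H` with at least two vertices in the part `V`. -/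
noncomputable def bigPart {n : ℕ} (V : Finset (Fin n)) (H : Finset (Edge n)) :
    Finset (Edge n) :=
  H.filter fun e => 2 ≤ ((e : Finset (Fin n)) ∩ V).card

/-- `(V₁,V₂,V₃)` is a 3-partition maximizing the number `|H_π|` of crossing
hyperedges of `H`. -/
def MaximizesCrossing {n : ℕ} (H : Finset (Edge n)) (V₁ V₂ V₃ : Finset (Fin n)) : Prop :=
  IsPartition3 V₁ V₂ V₃ ∧ ∀ W₁ W₂ W₃ : Finset (Fin n), IsPartition3 W₁ W₂ W₃ →
    (crossing W₁ W₂ W₃ H).card ≤ (crossing V₁ V₂ V₃ H).card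

/-- The edge set of the shadow graph of `H`: pairs `{x,y}` contained in some
hyperedge of `H`. -/
noncomputable def shadowE {n : ℕ} (H : Finset (Edge n)) : Finset (Finset (Fin n)) :=
  (Finset.powersetCard 2 (Finset.univ : Finset (Fin n))).filter fun s =>
    ∃ e ∈ H, s ⊆ (e : Finset (Fin n))

/-- `J`: the induced subgraph on `V₁` of the shadow graph of `H₁`. -/
noncomputable def Jgraph {n : ℕ} (V₁ : Finset (Fin n)) (H : Finset (Edge n)) :
    Finset (Finset (Fin n)) :=
  (shadowE (bigPart V₁ H)).filter fun s => s ⊆ V₁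

/-- Degree of the vertex `x` in a graph given as a finset of (2-element) edges. -/
noncomputable def degIn {n : ℕ} (J : Finset (Finset (Fin n))) (x : Fin n) : ℕ :=
  (J.filter fun s => x ∈ s).card

/-- `d^H_{2,3}(x)`: the number of pairs `(y,z) ∈ V₂ × V₃` with `xyz ∈ H`. -/
noncomputable def d23 {n : ℕ} (H : Finset (Edge n)) (V₂ V₃ : Finset (Fin n)) (x : Fin n) : ℕ :=
  ((V₂ ×ˢ V₃).filter fun q => memH H {x, q.1, q.2}).card

/-- `d_S(x,y)`: the number of vertices `z ∈ S` with `xyz ∈ H`. -/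
noncomputable def codeg {n : ℕ} (H : Finset (Edge n)) (S : Finset (Fin n)) (x y : Fin n) : ℕ :=
  (S.filter fun z => memH H {x, y, z}).card

/-- `L_{2,3}(x,y)`: pairs `(y',z') ∈ V₂ × V₃` such that both `xy'z'` and `yy'z'`
are hyperedges of the sampled hypergraph. -/
noncomputable def L23 {n : ℕ} (ω : Edge n → Bool) (V₂ V₃ : Finset (Fin n)) (x y : Fin n) :
    Finset (Fin n × Fin n) :=
  (V₂ ×ˢ V₃).filter fun q =>
    memH (hedges ω) {x, q.1, q.2} ∧ memH (hedges ω) {y, q.1, q.2}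

/-- `Q(π)`: the pairs `{x,y} ⊆ V₁` with `|L_{2,3}(x,y)| < 0.8 p² n² / 9`. -/
noncomputable def Qset {n : ℕ} (ω : Edge n → Bool) (p : ℝ) (V₁ V₂ V₃ : Finset (Fin n)) :
    Finset (Finset (Fin n)) :=
  (Finset.powersetCard 2 V₁).filter fun s =>
    ∃ x ∈ s, ∃ y ∈ s, x ≠ y ∧
      ((L23 ω V₂ V₃ x y).card : ℝ) < 0.8 * p ^ 2 * (n : ℝ) ^ 2 / 9

/-- The degree `d(v)` of a vertex: the number of hyperedges containing `v`. -/
noncomputable def vdeg {n : ℕ} (ω : Edge n → Bool) (v : Fin n) : ℕ :=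
  ((hedges ω).filter fun e => v ∈ (e : Finset (Fin n))).card

/-- `t(G)`: the number of hyperedges of a maximum tripartite subhypergraph of `G`. -/
noncomputable def tG {n : ℕ} (ω : Edge n → Bool) : ℕ :=
  (((hedges ω).powerset).filter fun H => Tripartite H).sup Finset.card

/-- `G(v,E,A,T) = K(v,E,A,T) ∩ G` where
`K(v,E,A,T) = {xyz : x ∈ A, {y,z} ∈ T, ∃ e ∈ E, x ∈ e, y ∉ e, z ∉ e}`. -/
noncomputable def GvEAT {n : ℕ} (ω : Edge n → Bool) (A : Finset (Fin n))
    (T : Finset (Finset (Fin n))) (E : Finset (Edge n)) : Finset (Edge n) :=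
  (hedges ω).filter fun f => ∃ x ∈ A, ∃ t ∈ T, (f : Finset (Fin n)) = insert x t ∧
    ∃ e ∈ E, x ∈ (e : Finset (Fin n)) ∧ ∀ z ∈ t, z ∉ (e : Finset (Fin n))

/-- `{w₁, w₂, y, z}` spans an `F̂₅` (w.r.t. `H` and the partition `(V₁,V₂,V₃)`):
`w₁yz, w₂yz ∈ G_π` and there exists `e ∈ H` with `w₁, w₂ ∈ e ∩ V₁` and `y, z ∉ e`. -/
def F5hat {n : ℕ} (ω : Edge n → Bool) (H : Finset (Edge n)) (V₁ V₂ V₃ : Finset (Fin n))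
    (w₁ w₂ y z : Fin n) : Prop :=
  memH (crossing V₁ V₂ V₃ (hedges ω)) {w₁, y, z} ∧
  memH (crossing V₁ V₂ V₃ (hedges ω)) {w₂, y, z} ∧
  ∃ e ∈ H, w₁ ∈ (e : Finset (Fin n)) ∧ w₂ ∈ (e : Finset (Fin n)) ∧
    w₁ ∈ V₁ ∧ w₂ ∈ V₁ ∧ y ∉ (e : Finset (Fin n)) ∧ z ∉ (e : Finset (Fin n))

/-- `g(p,s,r,i) = n · C(n,s) · C(n²,r) · (p · C(s,i) · pⁱ)ʳ`. -/
noncomputable def gbound (n : ℕ) (p : ℝ) (s r i : ℕ) : ℝ :=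
  (n : ℝ) * (n.choose s) * ((n ^ 2).choose r) * (p * (s.choose i) * p ^ i) ^ r

/-!
An edge `x₁x₂` of `J` lies in a hyperedge `x₁x₂w` of `H`, and every pair `(y, z)` of
`L₂,₃(x₁,x₂)` avoiding `w` spans an `F̂₅` together with it. The pairs through `w` inject into
the set of `z` with `x₁wz, x₂wz ∈ G`, so it suffices that with high probability every such
common link has at most `p²n²/180` vertices: then at least `(0.8/9 - 1/180) p²n² = p²n²/12`
pairs remain. For fixed `x₁, x₂, w` the pairs `{x₁wz, x₂wz}` are disjoint for distinct `z`, so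
a common link of size `t = ⌊p²n²/180⌋ + 1` has probability at most `C(n,t) p^{2t} ≤ (180e/n)^t`,
and a union bound over the `n³` triples gives `n³ 2^{-t} ≤ 1/n` once `n ≥ 1000`, because
`p > 40 √(log n) / n` forces `t ≥ 1600 log n / 180`.
-/

open scoped ENNReal

section Probability

variable {n : ℕ} {p : ℝ}

instance isFiniteMeasure_bern : IsFiniteMeasure (bern p) := by
  unfold bern; infer_instance

lemma isProbabilityMeasure_bern (h0 : 0 ≤ p) (h1 : p ≤ 1) : IsProbabilityMeasure (bern p) := by
  constructor
  simp only [bern, Measure.coe_add, Measure.coe_smul, Pi.add_apply, Pi.smul_apply, measure_univ,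
    ENNReal.smul_one]
  rw [← ENNReal.coe_add, ← Real.toNNReal_add h0 (by linarith)]
  norm_num

lemma bern_singleton_true : bern p {true} = ENNReal.ofReal p := by
  simp [bern, Measure.dirac_apply', ENNReal.ofReal]

lemma isProbabilityMeasure_hypM (h0 : 0 ≤ p) (h1 : p ≤ 1) : IsProbabilityMeasure (hypM n p) := by
  have := isProbabilityMeasure_bern h0 h1
  unfold hypM; infer_instance

lemma hypM_forall_true (h0 : 0 ≤ p) (h1 : p ≤ 1) (S : Finset (Edge n)) :
    hypM n p {ω | ∀ e ∈ S, ω e = true} = ENNReal.ofReal p ^ #S := by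
  have := isProbabilityMeasure_bern h0 h1
  have hpi : {ω : Edge n → Bool | ∀ e ∈ S, ω e = true}
      = Set.univ.pi fun e => if e ∈ S then {true} else Set.univ := by
    ext ω
    simp only [Set.mem_ofPred_eq, Set.mem_pi, Set.mem_univ, true_implies]
    refine forall_congr' fun e => ?_
    split_ifs <;> simp_all
  rw [hpi, hypM, Measure.pi_pi]
  simp only [apply_ite (bern p), measure_univ, bern_singleton_true]
  rw [prod_ite_mem univ S, univ_inter, prod_const]

/-- Union bound over the `t`-subsets `S ⊆ A`: by disjointness, all edges of the `f z`, `z ∈ S`,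
are present with probability at most `p ^ (k t)`. -/
lemma hypM_le_choose_mul_of_pairwiseDisjoint {α : Type*} (h0 : 0 ≤ p) (h1 : p ≤ 1)
    {A : Finset α} {f : α → Finset (Edge n)} {k : ℕ} (hdisj : (A : Set α).PairwiseDisjoint f)
    (hk : ∀ z ∈ A, k ≤ #(f z)) (t : ℕ) :
    hypM n p {ω : Edge n → Bool | t ≤ #{z ∈ A | ∀ e ∈ f z, ω e = true}}
      ≤ (#A).choose t * ENNReal.ofReal p ^ (k * t) := by
  have hsub : {ω : Edge n → Bool | t ≤ #{z ∈ A | ∀ e ∈ f z, ω e = true}}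
      ⊆ ⋃ S ∈ A.powersetCard t, {ω : Edge n → Bool | ∀ e ∈ S.biUnion f, ω e = true} := by
    intro ω hω
    obtain ⟨S, hS, hcard⟩ := exists_subset_card_eq hω
    refine Set.mem_biUnion (mem_powersetCard.2 ⟨hS.trans (filter_subset _ _), hcard⟩) ?_
    simp only [Set.mem_ofPred_eq, mem_biUnion]
    rintro e ⟨z, hz, he⟩
    exact (mem_filter.1 (hS hz)).2 e he
  have hS : ∀ S ∈ A.powersetCard t,
      hypM n p {ω : Edge n → Bool | ∀ e ∈ S.biUnion f, ω e = true}
        ≤ ENNReal.ofReal p ^ (k * t) := by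
    intro S hS
    obtain ⟨hSA, rfl⟩ := mem_powersetCard.1 hS
    rw [hypM_forall_true h0 h1, card_biUnion (hdisj.subset hSA)]
    refine pow_le_pow_right_of_le_one' (ENNReal.ofReal_le_one.2 h1) ?_
    calc k * #S = ∑ _ ∈ S, k := by rw [sum_const, smul_eq_mul, mul_comm]
      _ ≤ ∑ z ∈ S, #(f z) := sum_le_sum fun z hz => hk z (hSA hz)
  calc _ ≤ _ := measure_mono hsub
    _ ≤ ∑ S ∈ A.powersetCard t, hypM n p {ω : Edge n → Bool | ∀ e ∈ S.biUnion f, ω e = true} :=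
        measure_biUnion_finset_le _ _
    _ ≤ ∑ _S ∈ A.powersetCard t, ENNReal.ofReal p ^ (k * t) := sum_le_sum hS
    _ = _ := by rw [sum_const, card_powersetCard, nsmul_eq_mul]

lemma tendsto_measure_of_compl_subset {ι : Type*} {l : Filter ι} {Ω : ι → Type*}
    [∀ i, MeasurableSpace (Ω i)] {μ : ∀ i, Measure (Ω i)} [∀ i, IsProbabilityMeasure (μ i)]
    {A B : ∀ i, Set (Ω i)} (hB : Tendsto (fun i => μ i (B i)) l (nhds 0))
    (hAB : ∀ i, (B i)ᶜ ⊆ A i) : Tendsto (fun i => μ i (A i)) l (nhds 1) := by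
  have hlow : Tendsto (fun i => 1 - μ i (B i)) l (nhds 1) := by
    simpa using ENNReal.Tendsto.sub tendsto_const_nhds hB (Or.inl ENNReal.one_ne_top)
  refine tendsto_of_tendsto_of_tendsto_of_le_of_le hlow tendsto_const_nhds (fun i => ?_)
    fun i => prob_le_one
  calc 1 - μ i (B i) ≤ μ i (B i)ᶜ := by
        rw [tsub_le_iff_left, ← measure_univ (μ := μ i)]
        exact measure_univ_le_add_compl _
    _ ≤ μ i (A i) := measure_mono (hAB i)

end Probability

section Link

variable {n : ℕ}

lemma memH_hedges_iff {ω : Edge n → Bool} {e : Edge n} :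
    memH (hedges ω) (e : Finset (Fin n)) ↔ ω e = true :=
  ⟨fun ⟨_, he', h⟩ => Subtype.ext h ▸ (mem_filter.1 he').2,
    fun h => ⟨e, mem_filter.2 ⟨mem_univ _, h⟩, rfl⟩⟩

noncomputable def linkCommon (ω : Edge n → Bool) (x₁ x₂ w : Fin n) : Finset (Fin n) :=
  {z | z ∉ ({x₁, x₂, w} : Finset (Fin n)) ∧
    memH (hedges ω) {x₁, w, z} ∧ memH (hedges ω) {x₂, w, z}}

noncomputable def linkEdges (x₁ x₂ w z : Fin n) : Finset (Edge n) :=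
  {e | (e : Finset (Fin n)) = {x₁, w, z} ∨ (e : Finset (Fin n)) = {x₂, w, z}}

lemma pairwiseDisjoint_linkEdges (x₁ x₂ w : Fin n) :
    ((univ \ {x₁, x₂, w} : Finset (Fin n)) : Set (Fin n)).PairwiseDisjoint
      (linkEdges x₁ x₂ w) := by
  have key : ∀ {z z' : Fin n} {e : Edge n}, z ∉ ({x₁, x₂, w} : Finset (Fin n)) →
      e ∈ linkEdges x₁ x₂ w z → e ∈ linkEdges x₁ x₂ w z' → z = z' := by
    intro z z' e hz he he'
    simp only [linkEdges, mem_filter, mem_univ, true_and] at he he'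
    have hze : z ∈ (e : Finset (Fin n)) := by rcases he with h | h <;> simp [h]
    rcases he' with h | h <;> simp only [h, mem_insert, mem_singleton] at hze <;>
      simp_all
  intro z hz z' _ hzz'
  refine disjoint_left.2 fun e he he' => hzz' (key ?_ he he')
  simpa using hz

lemma two_le_card_linkEdges {x₁ x₂ w z : Fin n} (h12 : x₁ ≠ x₂) (h1w : x₁ ≠ w) (h2w : x₂ ≠ w)
    (hz : z ∉ ({x₁, x₂, w} : Finset (Fin n))) : 2 ≤ #(linkEdges x₁ x₂ w z) := by
  simp only [mem_insert, mem_singleton, not_or] at hz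
  obtain ⟨hz1, hz2, hzw⟩ := hz
  let e₁ : Edge n := ⟨{x₁, w, z}, card_eq_three.2 ⟨_, _, _, h1w, Ne.symm hz1, Ne.symm hzw, rfl⟩⟩
  let e₂ : Edge n := ⟨{x₂, w, z}, card_eq_three.2 ⟨_, _, _, h2w, Ne.symm hz2, Ne.symm hzw, rfl⟩⟩
  have hne : e₁ ≠ e₂ := fun h => by
    have : x₁ ∈ (e₂ : Finset (Fin n)) := h ▸ by simp [e₁]
    simp only [e₂, mem_insert, mem_singleton] at this
    rcases this with h | h | h
    exacts [h12 h, h1w h, hz1 h.symm]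
  exact one_lt_card.2 ⟨e₁, by simp [linkEdges, e₁], e₂, by simp [linkEdges, e₂], hne⟩

lemma linkCommon_subset (ω : Edge n → Bool) (x₁ x₂ w : Fin n) :
    linkCommon ω x₁ x₂ w ⊆
      {z ∈ univ \ {x₁, x₂, w} | ∀ e ∈ linkEdges x₁ x₂ w z, ω e = true} := by
  intro z hz
  simp only [linkCommon, mem_filter, mem_univ, true_and] at hz
  obtain ⟨hz, h₁, h₂⟩ := hz
  refine mem_filter.2 ⟨mem_sdiff.2 ⟨mem_univ _, hz⟩, fun e he => ?_⟩
  simp only [linkEdges, mem_filter, mem_univ, true_and] at he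
  rcases he with h | h <;> rw [← memH_hedges_iff, h] <;> assumption

end Link

section BadEvent

variable {n : ℕ} {p : ℝ}

lemma hypM_card_linkCommon_ge_le (h0 : 0 ≤ p) (h1 : p ≤ 1) {x₁ x₂ w : Fin n} (h12 : x₁ ≠ x₂)
    (h1w : x₁ ≠ w) (h2w : x₂ ≠ w) (t : ℕ) :
    hypM n p {ω | t ≤ #(linkCommon ω x₁ x₂ w)} ≤ n.choose t * ENNReal.ofReal p ^ (2 * t) := by
  calc _ ≤ hypM n p {ω : Edge n → Bool |
          t ≤ #{z ∈ univ \ {x₁, x₂, w} | ∀ e ∈ linkEdges x₁ x₂ w z, ω e = true}} :=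
        measure_mono fun ω hω => le_trans hω (card_le_card (linkCommon_subset ω x₁ x₂ w))
    _ ≤ (#(univ \ {x₁, x₂, w})).choose t * ENNReal.ofReal p ^ (2 * t) :=
        hypM_le_choose_mul_of_pairwiseDisjoint h0 h1 (pairwiseDisjoint_linkEdges x₁ x₂ w)
          (fun z hz => two_le_card_linkEdges h12 h1w h2w (mem_sdiff.1 hz).2) t
    _ ≤ n.choose t * ENNReal.ofReal p ^ (2 * t) := by
        gcongr
        exact (card_le_univ _).trans (Fintype.card_fin n).le

def ManyCommonLink (n t : ℕ) : Set (Edge n → Bool) :=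
  {ω | ∃ x₁ x₂ w : Fin n, x₁ ≠ x₂ ∧ x₁ ≠ w ∧ x₂ ≠ w ∧ t ≤ #(linkCommon ω x₁ x₂ w)}

lemma hypM_manyCommonLink_le (h0 : 0 ≤ p) (h1 : p ≤ 1) (t : ℕ) :
    hypM n p (ManyCommonLink n t) ≤ n ^ 3 * (n.choose t * ENNReal.ofReal p ^ (2 * t)) := by
  let E : Fin n × Fin n × Fin n → Set (Edge n → Bool) := fun q => {ω |
    q.1 ≠ q.2.1 ∧ q.1 ≠ q.2.2 ∧ q.2.1 ≠ q.2.2 ∧ t ≤ #(linkCommon ω q.1 q.2.1 q.2.2)}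
  have hE : ∀ q, hypM n p (E q) ≤ n.choose t * ENNReal.ofReal p ^ (2 * t) := by
    intro q
    by_cases hq : q.1 ≠ q.2.1 ∧ q.1 ≠ q.2.2 ∧ q.2.1 ≠ q.2.2
    · exact (measure_mono fun ω hω => hω.2.2.2).trans
        (hypM_card_linkCommon_ge_le h0 h1 hq.1 hq.2.1 hq.2.2 t)
    · rw [measure_mono_null (t := ∅) (fun ω hω => hq ⟨hω.1, hω.2.1, hω.2.2.1⟩) measure_empty]
      exact zero_le
  calc hypM n p (ManyCommonLink n t) ≤ hypM n p (⋃ q, E q) :=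
        measure_mono fun ω ⟨x₁, x₂, w, h⟩ => Set.mem_iUnion.2 ⟨(x₁, x₂, w), h⟩
    _ ≤ ∑ q, hypM n p (E q) := measure_iUnion_fintype_le _ _
    _ ≤ ∑ _q : Fin n × Fin n × Fin n, n.choose t * ENNReal.ofReal p ^ (2 * t) :=
        sum_le_sum fun q _ => hE q
    _ = _ := by simp [sum_const, card_univ, pow_three, mul_assoc]

end BadEvent

section Estimates

open Real

lemma choose_mul_pow_le (n : ℕ) {t : ℕ} (ht : 0 < t) {x : ℝ} (hx : 0 ≤ x) :
    (n.choose t : ℝ) * x ^ t ≤ (exp 1 * n * x / t) ^ t := by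
  have ht' : (0 : ℝ) < t := by exact_mod_cast ht
  have hfact : (0 : ℝ) < t.factorial := by exact_mod_cast t.factorial_pos
  calc (n.choose t : ℝ) * x ^ t ≤ n ^ t / t.factorial * x ^ t := by
        gcongr; exact Nat.choose_le_pow_div t n
    _ = (n * x / t) ^ t * (t ^ t / t.factorial) := by
        rw [div_pow, mul_pow]; field_simp
    _ ≤ (n * x / t) ^ t * exp t := by gcongr; exact pow_div_factorial_le_exp (t : ℝ) ht'.le t
    _ = (exp 1 * n * x / t) ^ t := by
        rw [← exp_one_pow, ← mul_pow]; ring_nf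

lemma cube_mul_choose_mul_pow_le {n t : ℕ} {r : ℝ} (hn : 1000 ≤ n)
    (hr : 40 * √(log n) / n < r) (ht : r ^ 2 * n ^ 2 < 180 * t) :
    (n : ℝ) ^ 3 * n.choose t * r ^ (2 * t) ≤ 1 / n := by
  have hn' : (1000 : ℝ) ≤ n := by exact_mod_cast hn
  have hn0 : (0 : ℝ) < n := by linarith
  have hlog0 : 0 ≤ log n := log_nonneg (by linarith)
  have hlog : 1600 * log n ≤ r ^ 2 * n ^ 2 := by
    have h : 40 * √(log n) ≤ r * n := by rw [div_lt_iff₀ hn0] at hr; exact hr.le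
    calc 1600 * log n = (40 * √(log n)) ^ 2 := by rw [mul_pow, sq_sqrt hlog0]; norm_num
      _ ≤ (r * n) ^ 2 := pow_le_pow_left₀ (by positivity) h 2
      _ = r ^ 2 * n ^ 2 := by ring
  have ht0 : 0 < t := by
    have : (0 : ℝ) < t := by nlinarith [sq_nonneg (r * n)]
    exact_mod_cast this
  have hbase : exp 1 * n * r ^ 2 / t ≤ 1 / 2 := by
    have := exp_one_lt_d9
    rw [div_le_iff₀ (by exact_mod_cast ht0), ← mul_le_mul_iff_of_pos_right hn0]
    nlinarith [sq_nonneg r]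
  have hhalf : (n.choose t : ℝ) * (r ^ 2) ^ t ≤ (1 / 2) ^ t :=
    (choose_mul_pow_le n ht0 (sq_nonneg r)).trans (pow_le_pow_left₀ (by positivity) hbase t)
  -- `t > r²n²/180 ≥ 1600 log n / 180 > 4 log n / log 2`
  have htwo : (n : ℝ) ^ 4 ≤ 2 ^ t := by
    have := log_two_gt_d9
    rw [← log_le_log_iff (by positivity) (by positivity), log_pow, log_pow]
    push_cast
    nlinarith
  calc (n : ℝ) ^ 3 * n.choose t * r ^ (2 * t) = (n : ℝ) ^ 3 * (n.choose t * (r ^ 2) ^ t) := by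
        rw [pow_mul, mul_assoc]
    _ ≤ (n : ℝ) ^ 3 * (1 / 2) ^ t := by gcongr
    _ ≤ 1 / (n : ℝ) := by
        rw [le_div_iff₀ hn0]
        calc (n : ℝ) ^ 3 * (1 / 2) ^ t * n = n ^ 4 / 2 ^ t := by rw [one_div_pow]; ring
          _ ≤ 1 := (div_le_one (by positivity)).2 htwo

end Estimates

open Real in
lemma tendsto_hypM_manyCommonLink {p : ℕ → ℝ} (hp0 : ∀ n, 0 ≤ p n) (hp1 : ∀ n, p n ≤ 1)
    (hp : ∀ n : ℕ, 40 * √(log n) / n < p n) :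
    Tendsto (fun n => hypM n (p n) (ManyCommonLink n (⌊p n ^ 2 * n ^ 2 / 180⌋₊ + 1)))
      atTop (nhds 0) := by
  have hinv : Tendsto (fun n : ℕ => ENNReal.ofReal (1 / n)) atTop (nhds 0) := by
    simpa using ENNReal.tendsto_ofReal tendsto_one_div_atTop_nhds_zero_nat
  refine tendsto_of_tendsto_of_tendsto_of_le_of_le' tendsto_const_nhds hinv
    (Eventually.of_forall fun _ => zero_le) ((eventually_ge_atTop 1000).mono fun n hn => ?_)
  set t := ⌊p n ^ 2 * n ^ 2 / 180⌋₊ + 1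
  have ht : p n ^ 2 * n ^ 2 < 180 * t := by
    have := Nat.lt_floor_add_one (p n ^ 2 * n ^ 2 / 180)
    push_cast [t]; linarith
  calc hypM n (p n) (ManyCommonLink n t)
      ≤ n ^ 3 * (n.choose t * ENNReal.ofReal (p n) ^ (2 * t)) :=
        hypM_manyCommonLink_le (hp0 n) (hp1 n) t
    _ = ENNReal.ofReal (n ^ 3 * n.choose t * p n ^ (2 * t)) := by
        rw [ENNReal.ofReal_mul (by positivity), ENNReal.ofReal_mul (by positivity),
          ENNReal.ofReal_pow (hp0 n), ENNReal.ofReal_pow (by positivity), ENNReal.ofReal_natCast,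
          ENNReal.ofReal_natCast, mul_assoc]
    _ ≤ ENNReal.ofReal (1 / n) :=
        ENNReal.ofReal_le_ofReal (cube_mul_choose_mul_pow_le hn (hp n) ht)

section Deterministic

variable {n : ℕ} {V₁ V₂ V₃ : Finset (Fin n)}

lemma memH_crossing_of_memH (hπ : IsPartition3 V₁ V₂ V₃) {G : Finset (Edge n)} {x y z : Fin n}
    (hx : x ∈ V₁) (hy : y ∈ V₂) (hz : z ∈ V₃) (h : memH G {x, y, z}) :
    memH (crossing V₁ V₂ V₃ G) {x, y, z} := by
  obtain ⟨d12, d13, d23, -⟩ := hπ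
  obtain ⟨e, he, hexyz⟩ := h
  have hx₂ := disjoint_left.1 d12 hx
  have hx₃ := disjoint_left.1 d13 hx
  have hy₁ := disjoint_right.1 d12 hy
  have hy₃ := disjoint_left.1 d23 hy
  have hz₁ := disjoint_right.1 d13 hz
  have hz₂ := disjoint_right.1 d23 hz
  refine ⟨e, mem_filter.2 ⟨he, ?_⟩, hexyz⟩
  simp [hexyz, insert_inter_of_mem, insert_inter_of_notMem, hx, hx₂, hx₃, hy, hy₁, hy₃, hz,
    hz₁, hz₂]

lemma exists_edge_of_mem_Jgraph {H : Finset (Edge n)} {x₁ x₂ : Fin n} (hne : x₁ ≠ x₂)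
    (hJ : {x₁, x₂} ∈ Jgraph V₁ H) :
    x₁ ∈ V₁ ∧ x₂ ∈ V₁ ∧ ∃ e ∈ H, ∃ w ∉ ({x₁, x₂} : Finset (Fin n)),
      (e : Finset (Fin n)) = insert w {x₁, x₂} := by
  simp only [Jgraph, shadowE, bigPart, mem_filter] at hJ
  obtain ⟨⟨-, e, ⟨he, -⟩, hsub⟩, hV⟩ := hJ
  obtain ⟨w, hw, hew⟩ := exists_eq_insert_iff.2 ⟨hsub, by rw [card_pair hne, e.2]⟩
  exact ⟨hV (by simp), hV (by simp), e, he, w, hw, hew.symm⟩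

variable {ω : Edge n → Bool} {H : Finset (Edge n)} {x₁ x₂ w : Fin n}

lemma F5hat_of_mem_L23 (hπ : IsPartition3 V₁ V₂ V₃) (hx₁ : x₁ ∈ V₁) (hx₂ : x₂ ∈ V₁)
    {e : Edge n} (he : e ∈ H) (hew : (e : Finset (Fin n)) = insert w {x₁, x₂})
    {q : Fin n × Fin n} (hq : q ∈ L23 ω V₂ V₃ x₁ x₂) (hq₁ : q.1 ≠ w) (hq₂ : q.2 ≠ w) :
    F5hat ω H V₁ V₂ V₃ x₁ x₂ q.1 q.2 := by
  obtain ⟨hy, hz⟩ := mem_product.1 (mem_filter.1 hq).1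
  obtain ⟨h₁, h₂⟩ := (mem_filter.1 hq).2
  have hy₁ := disjoint_right.1 hπ.1 hy
  have hz₁ := disjoint_right.1 hπ.2.1 hz
  refine ⟨memH_crossing_of_memH hπ hx₁ hy hz h₁, memH_crossing_of_memH hπ hx₂ hy hz h₂,
    e, he, by simp [hew], by simp [hew], hx₁, hx₂, ?_, ?_⟩ <;>
  simp only [hew, mem_insert, mem_singleton, not_or] <;>
  exact ⟨by assumption, by rintro rfl; contradiction, by rintro rfl; contradiction⟩

/-- A pair of `L₂,₃(x₁,x₂)` through `w` is determined by its other vertex, which lies in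
`linkCommon ω x₁ x₂ w`. -/
lemma card_L23_filter_le_card_linkCommon (hπ : IsPartition3 V₁ V₂ V₃) (hx₁ : x₁ ∈ V₁)
    (hx₂ : x₂ ∈ V₁) :
    #{q ∈ L23 ω V₂ V₃ x₁ x₂ | q.1 = w ∨ q.2 = w} ≤ #(linkCommon ω x₁ x₂ w) := by
  obtain ⟨d12, d13, d23, -⟩ := hπ
  have hL : ∀ q ∈ {q ∈ L23 ω V₂ V₃ x₁ x₂ | q.1 = w ∨ q.2 = w}, q.1 ∈ V₂ ∧ q.2 ∈ V₃ ∧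
      (q.1 = w ∨ q.2 = w) ∧ memH (hedges ω) {x₁, q.1, q.2} ∧ memH (hedges ω) {x₂, q.1, q.2} := by
    intro q hq
    simp only [L23, mem_filter, mem_product] at hq
    exact ⟨hq.1.1.1, hq.1.1.2, hq.2, hq.1.2⟩
  refine card_le_card_of_injOn (fun q => if q.1 = w then q.2 else q.1) (fun q hq => ?_)
    fun q hq q' hq' hqq' => ?_
  · obtain ⟨hy, hz, hw, h₁, h₂⟩ := hL q hq
    have hyz := disjoint_iff_ne.1 d23 _ hy _ hz
    simp only [linkCommon, mem_coe, mem_filter, mem_univ, true_and, mem_insert, mem_singleton,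
      not_or]
    split_ifs with h
    · subst h
      exact ⟨⟨(disjoint_iff_ne.1 d13 _ hx₁ _ hz).symm, (disjoint_iff_ne.1 d13 _ hx₂ _ hz).symm,
        hyz.symm⟩, h₁, h₂⟩
    · obtain rfl := hw.resolve_left h
      rw [pair_comm]
      exact ⟨⟨(disjoint_iff_ne.1 d12 _ hx₁ _ hy).symm, (disjoint_iff_ne.1 d12 _ hx₂ _ hy).symm,
        hyz⟩, h₁, h₂⟩
  · obtain ⟨hy, hz, hw, -⟩ := hL q hq
    obtain ⟨hy', hz', hw', -⟩ := hL q' hq'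
    simp only at hqq'
    split_ifs at hqq' with h h' h'
    · exact Prod.ext (h.trans h'.symm) hqq'
    · exact absurd hqq' (disjoint_iff_ne.1 d23 _ hy' _ hz).symm
    · exact absurd hqq' (disjoint_iff_ne.1 d23 _ hy _ hz')
    · exact Prod.ext hqq' ((hw.resolve_left h).trans (hw'.resolve_left h').symm)

lemma card_L23_le (hπ : IsPartition3 V₁ V₂ V₃) (hx₁ : x₁ ∈ V₁) (hx₂ : x₂ ∈ V₁)
    {e : Edge n} (he : e ∈ H) (hew : (e : Finset (Fin n)) = insert w {x₁, x₂}) :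
    #(L23 ω V₂ V₃ x₁ x₂) ≤
      #{q ∈ V₂ ×ˢ V₃ | F5hat ω H V₁ V₂ V₃ x₁ x₂ q.1 q.2} + #(linkCommon ω x₁ x₂ w) := by
  rw [← card_filter_add_card_filter_not (fun q : Fin n × Fin n => q.1 = w ∨ q.2 = w),
    add_comm]
  gcongr
  · intro q hq
    obtain ⟨hqL, hqw⟩ := mem_filter.1 hq
    obtain ⟨hq₁, hq₂⟩ := not_or.1 hqw
    exact mem_filter.2 ⟨(mem_filter.1 hqL).1, F5hat_of_mem_L23 hπ hx₁ hx₂ he hew hqL hq₁ hq₂⟩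
  · exact card_L23_filter_le_card_linkCommon hπ hx₁ hx₂

theorem le_card_F5hat {p : ℝ} (hπ : IsPartition3 V₁ V₂ V₃) (hne : x₁ ≠ x₂)
    (hJ : {x₁, x₂} ∈ Jgraph V₁ H) (hQ : {x₁, x₂} ∉ Qset ω p V₁ V₂ V₃)
    (hD : ∀ w ∉ ({x₁, x₂} : Finset (Fin n)),
      (#(linkCommon ω x₁ x₂ w) : ℝ) ≤ p ^ 2 * n ^ 2 / 180) :
    p ^ 2 * n ^ 2 / 12 ≤ (#{q ∈ V₂ ×ˢ V₃ | F5hat ω H V₁ V₂ V₃ x₁ x₂ q.1 q.2} : ℝ) := by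
  obtain ⟨hx₁, hx₂, e, he, w, hw, hew⟩ := exists_edge_of_mem_Jgraph hne hJ
  have hL : 0.8 * p ^ 2 * n ^ 2 / 9 ≤ (#(L23 ω V₂ V₃ x₁ x₂) : ℝ) := by
    by_contra hlt
    refine hQ (mem_filter.2 ⟨mem_powersetCard.2 ⟨?_, card_pair hne⟩, x₁, by simp, x₂, by simp,
      hne, not_le.1 hlt⟩)
    simp [insert_subset_iff, hx₁, hx₂]
  have hcard : (#(L23 ω V₂ V₃ x₁ x₂) : ℝ) ≤
      #{q ∈ V₂ ×ˢ V₃ | F5hat ω H V₁ V₂ V₃ x₁ x₂ q.1 q.2} + #(linkCommon ω x₁ x₂ w) := by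
    exact_mod_cast card_L23_le hπ hx₁ hx₂ he hew
  linarith [hD w hw]

end Deterministic

theorem stmt_10 :
    ∃ C : ℝ, 0 < C ∧ ∀ p : ℕ → ℝ,
      (∀ n : ℕ, p n ≤ 1) →
      (∀ n : ℕ, C * Real.sqrt (Real.log n) / n < p n) →
      Tendsto (fun n => hypM n (p n)
        {ω : Edge n → Bool | ∀ H ⊆ hedges ω, F5Free H →
          ∀ V₁ V₂ V₃ : Finset (Fin n), MaximizesCrossing H V₁ V₂ V₃ →
            Balanced3 V₁ V₂ V₃ →
          ∀ x₁ x₂ : Fin n, x₁ ≠ x₂ →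
            ({x₁, x₂} : Finset (Fin n)) ∈ Jgraph V₁ H →
            ({x₁, x₂} : Finset (Fin n)) ∉ Qset ω (p n) V₁ V₂ V₃ →
            p n ^ 2 * (n : ℝ) ^ 2 / 12 ≤
              (((V₂ ×ˢ V₃).filter fun q =>
                F5hat ω H V₁ V₂ V₃ x₁ x₂ q.1 q.2).card : ℝ)})
        atTop (nhds 1) := by
  refine ⟨40, by norm_num, fun p hp1 hp => ?_⟩
  have hp0 : ∀ n : ℕ, 0 ≤ p n := fun n =>
    (by positivity : (0 : ℝ) ≤ 40 * Real.sqrt (Real.log n) / n).trans (hp n).le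
  have := fun n => isProbabilityMeasure_hypM (n := n) (hp0 n) (hp1 n)
  refine tendsto_measure_of_compl_subset (tendsto_hypM_manyCommonLink hp0 hp1 hp) fun n ω hω => ?_
  intro H _ _ V₁ V₂ V₃ hmax _ x₁ x₂ hne hJ hQ
  refine le_card_F5hat hmax.1 hne hJ hQ fun w hw => ?_
  simp only [mem_insert, mem_singleton, not_or] at hw
  have hlt : #(linkCommon ω x₁ x₂ w) < ⌊p n ^ 2 * n ^ 2 / 180⌋₊ + 1 :=
    not_le.1 fun h => hω ⟨x₁, x₂, w, hne, Ne.symm hw.1, Ne.symm hw.2, h⟩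
  exact (Nat.le_floor_iff (by positivity)).1 (Nat.lt_succ_iff.1 hlt)
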